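/- Every Gröbner-coherent graded module over a graded ring (supported in non-negative degrees) is coherent as an ungraded module. -/

import Mathlib

open DirectSum

section Defs

variable {A : Type*} [CommRing A] (𝒜 : ℤ → AddSubgroup A) [GradedRing 𝒜]
variable {M : Type*} [AddCommGroup M] [Module A M] (ℳ : ℤ → AddSubgroup M)
  [DirectSum.Decomposition ℳ]

/-- The degree of an element of a graded object: the largest `n` whose homogeneous
component is nonzero (junk value for `x = 0`). -/
noncomputable def mdeg {σ M : Type*} [AddCommMonoid M] [SetLike σ M] [AddSubmonoidClass σ M]
    (ℳ : ℤ → σ) [DirectSum.Decomposition ℳ] (x : M) : ℤ :=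
  sSup {n : ℤ | (DirectSum.decompose ℳ x n : M) ≠ 0}

/-- The initial (top-degree) term of an element. -/
noncomputable def ini {σ M : Type*} [AddCommMonoid M] [SetLike σ M] [AddSubmonoidClass σ M]
    (ℳ : ℤ → σ) [DirectSum.Decomposition ℳ] (x : M) : M :=
  (DirectSum.decompose ℳ x (mdeg ℳ x) : M)

/-- The initial submodule of a submodule `N`: generated by initial terms of nonzero
elements of `N`. -/
def iniSub (N : Submodule A M) : Submodule A M :=
  Submodule.span A {m : M | ∃ x ∈ N, x ≠ 0 ∧ ini ℳ x = m}

/-- The ring grading is supported in non-negative degrees. -/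
def RingNonnegGraded : Prop := ∀ n < (0 : ℤ), ∀ a ∈ 𝒜 n, a = (0 : A)

/-- The module grading is bounded below. -/
def ModuleBddBelow : Prop := ∃ n₀ : ℤ, ∀ n < n₀, ∀ m ∈ ℳ n, m = (0 : M)

/-- A family of elements of `N` is a Gröbner basis for `N`. -/
def IsGrobnerBasis {I : Type*} (N : Submodule A M) (x : I → M) : Prop :=
  (∀ i, x i ∈ N) ∧
    Submodule.span A (Set.range fun i => ini ℳ (x i)) = iniSub ℳ N

/-- `a` gives a reduced expression `y = ∑ aᵢ xᵢ` with `deg aᵢ + deg xᵢ ≤ deg y`. -/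
def IsReducedExpr {I : Type*} (x : I → M) (y : M) (a : I →₀ A) : Prop :=
  y = a.sum (fun i c => c • x i) ∧
    ∀ i ∈ a.support, mdeg 𝒜 (a i) + mdeg ℳ (x i) ≤ mdeg ℳ y

/-- Set version of a Gröbner basis. -/
def IsGrobnerBasisSet (N : Submodule A M) (s : Set M) : Prop :=
  s ⊆ (N : Set M) ∧ Submodule.span A (ini ℳ '' s) = iniSub ℳ N

/-- `y` has a reduced expression in terms of the elements of `s`. -/
def HasReducedExprSet (s : Set M) (y : M) : Prop :=
  ∃ a : M →₀ A, ↑a.support ⊆ s ∧ y = a.sum (fun m c => c • m) ∧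
    ∀ m ∈ a.support, mdeg 𝒜 (a m) + mdeg ℳ m ≤ mdeg ℳ y

/-- A submodule is homogeneous when it contains all homogeneous components of its
elements. -/
def IsHomogSubmodule (N : Submodule A M) : Prop :=
  ∀ x ∈ N, ∀ n : ℤ, (DirectSum.decompose ℳ x n : M) ∈ N

/-- Graded-coherent: finitely generated, and every finitely generated homogeneous
submodule is finitely presented. -/
def GradedCoherent : Prop :=
  Module.Finite A M ∧ ∀ N : Submodule A M, N.FG → IsHomogSubmodule ℳ N →
    Module.FinitePresentation A N

/-- Gröbner-coherent: graded-coherent, and every finitely generated (possibly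
inhomogeneous) submodule admits a finite Gröbner basis. -/
def GrobnerCoherent : Prop :=
  GradedCoherent (A := A) ℳ ∧ ∀ N : Submodule A M, N.FG →
    ∃ s : Finset M, IsGrobnerBasisSet ℳ N ↑s

/-- A homogeneous generating family of syzygies of the initial terms of the `x i`
(with the free module graded by `deg eᵢ = deg xᵢ`). -/
def IsHomogSyzygyGens {I J : Type*} (x : I → M) (c : J → I →₀ A) : Prop :=
  (∀ j, ∃ d : ℤ, ∀ i, c j i ∈ 𝒜 (d - mdeg ℳ (x i))) ∧
    Submodule.span A (Set.range c) =
      LinearMap.ker (Finsupp.linearCombination A fun i => ini ℳ (x i))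

/-- Set version of a homogeneous generating set of syzygies of initial terms. -/
def IsHomogSyzygyGensSet (X : Set M) (C : Set (M →₀ A)) : Prop :=
  (∀ c ∈ C, ↑c.support ⊆ X) ∧
  (∀ c ∈ C, ∃ d : ℤ, ∀ m : M, c m ∈ 𝒜 (d - mdeg ℳ m)) ∧
  Submodule.span A C =
    Finsupp.supported A A X ⊓
      LinearMap.ker (Finsupp.linearCombination A fun m : M => ini ℳ m)

/-- The elements `z = ∑ c m • m` attached to a set of syzygies `C`. -/
def zElems (C : Set (M →₀ A)) : Set M :=
  (fun c : M →₀ A => c.sum fun m coeff => coeff • m) '' C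

/-- One step of Buchberger's algorithm: adjoin the `z`-elements of a homogeneous
generating set of syzygies. -/
def BuchbergerStep (X Y : Set M) : Prop :=
  ∃ C : Set (M →₀ A), IsHomogSyzygyGensSet 𝒜 ℳ X C ∧ Y = X ∪ zElems C

end Defs

/-!
Let `x₁, …, xₙ` be a finite Gröbner basis of `N`. The top component of any `y ∈ N` lies in the
initial submodule, so it is cancelled by a homogeneous combination of the `xᵢ`; since `M` is
bounded below, iterating this division shows that the `xᵢ` generate `N`. The initial submodule is
homogeneous and finitely generated, hence finitely presented, so the syzygies of the `ini xᵢ` are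
generated by finitely many homogeneous `c_j` of degrees `d_j`. Then `∑ᵢ c_{j,i} xᵢ` has degree
`< d_j`, and dividing it by the Gröbner basis gives `r_j` of degree `< d_j`. The lifts `c_j - r_j`
generate all relations among the `xᵢ`: the top component of a relation is a syzygy of the initial
terms, and subtracting the matching combination of lifts lowers its degree, which can only happen
finitely often because `A` is graded in non-negative degrees.
-/

lemma Int.forall_of_forall_lt_of_pred {P : ℤ → Prop} (n₀ : ℤ) (base : ∀ D < n₀, P D)
    (step : ∀ D, P (D - 1) → P D) (D : ℤ) : P D :=
  D.inductionOn' n₀ (step _ (base _ (by omega)))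
    (fun _ _ ih => step _ (by rwa [add_sub_cancel_right])) (fun _ _ _ => base _ (by omega))

lemma LinearMap.fg_ker_iff_finitePresentation_range {R M N : Type*} [Ring R] [AddCommGroup M]
    [Module R M] [AddCommGroup N] [Module R N] [Module.FinitePresentation R M]
    (f : M →ₗ[R] N) : (LinearMap.ker f).FG ↔ Module.FinitePresentation R (LinearMap.range f) := by
  rw [← f.ker_rangeRestrict]
  exact Module.FinitePresentation.fg_ker_iff _ f.surjective_rangeRestrict

section Degree

variable {σ M : Type*} [AddCommMonoid M] [SetLike σ M] [AddSubmonoidClass σ M]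
  (ℳ : ℤ → σ) [Decomposition ℳ]

/-- Unlike `mdeg ℳ x ≤ D`, this has no junk case at `x = 0`. -/
def DegLE (x : M) (D : ℤ) : Prop := ∀ n, D < n → (decompose ℳ x n : M) = 0

variable {ℳ} {x y : M} {D D' : ℤ}

lemma eq_zero_of_forall_decompose_eq_zero (h : ∀ n, (decompose ℳ x n : M) = 0) : x = 0 := by
  classical
  rw [← sum_support_decompose ℳ x]
  exact Finset.sum_eq_zero fun n _ => h n

lemma finite_setOf_decompose_ne_zero (x : M) : {n : ℤ | (decompose ℳ x n : M) ≠ 0}.Finite := by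
  classical
  refine (DFinsupp.support (decompose ℳ x)).finite_toSet.subset fun n hn => ?_
  simpa [DFinsupp.mem_support_iff] using hn

lemma le_mdeg {n : ℤ} (h : (decompose ℳ x n : M) ≠ 0) : n ≤ mdeg ℳ x :=
  le_csSup (finite_setOf_decompose_ne_zero x).bddAbove h

lemma decompose_mdeg_ne_zero (hx : x ≠ 0) : (decompose ℳ x (mdeg ℳ x) : M) ≠ 0 := by
  refine Set.Nonempty.csSup_mem ?_ (finite_setOf_decompose_ne_zero x)
  by_contra h
  exact hx (eq_zero_of_forall_decompose_eq_zero fun n => by_contra fun hn => h ⟨n, hn⟩)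

lemma coe_decompose_sum {ι : Type*} (s : Finset ι) (f : ι → M) (n : ℤ) :
    (decompose ℳ (∑ i ∈ s, f i) n : M) = ∑ i ∈ s, (decompose ℳ (f i) n : M) := by
  rw [decompose_sum, DFinsupp.finsetSum_apply, AddSubmonoidClass.coe_finsetSum]

variable (ℳ) in
lemma ini_mem (x : M) : ini ℳ x ∈ ℳ (mdeg ℳ x) := SetLike.coe_mem _

lemma degLE_of_mem {n : ℤ} (h : x ∈ ℳ n) : DegLE ℳ x n :=
  fun _ hn => decompose_of_mem_ne ℳ h hn.ne

lemma degLE_zero (D : ℤ) : DegLE ℳ (0 : M) D := fun n _ => by simp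

variable (ℳ) in
lemma degLE_mdeg (x : M) : DegLE ℳ x (mdeg ℳ x) :=
  fun _ hn => by_contra fun h => hn.not_ge (le_mdeg h)

lemma DegLE.mono (h : DegLE ℳ x D) (hD : D ≤ D') : DegLE ℳ x D' :=
  fun n hn => h n (hD.trans_lt hn)

lemma DegLE.add (hx : DegLE ℳ x D) (hy : DegLE ℳ y D) : DegLE ℳ (x + y) D :=
  fun n hn => by simp [hx n hn, hy n hn]

lemma DegLE.sum {ι : Type*} {s : Finset ι} {f : ι → M} (h : ∀ i ∈ s, DegLE ℳ (f i) D) :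
    DegLE ℳ (∑ i ∈ s, f i) D :=
  Finset.sum_induction _ (DegLE ℳ · D) (fun _ _ => DegLE.add) (degLE_zero D) h

lemma DegLE.pred (h : DegLE ℳ x D) (hD : (decompose ℳ x D : M) = 0) : DegLE ℳ x (D - 1) :=
  fun n hn => (eq_or_lt_of_le (by omega : D ≤ n)).elim (fun e => e ▸ hD) (h n)

lemma DegLE.eq_zero {n₀ : ℤ} (hℳ : ∀ n < n₀, ∀ m ∈ ℳ n, m = (0 : M)) (h : DegLE ℳ x D)
    (hD : D < n₀) : x = 0 :=
  eq_zero_of_forall_decompose_eq_zero fun n =>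
    if hn : D < n then h n hn else hℳ n (by omega) _ (SetLike.coe_mem _)

lemma DegLE.mdeg_eq (h : DegLE ℳ x D) (hD : (decompose ℳ x D : M) ≠ 0) : mdeg ℳ x = D := by
  refine le_antisymm (not_lt.mp fun hlt => ?_) (le_mdeg hD)
  exact decompose_mdeg_ne_zero (fun hx => hD (by simp [hx])) (h _ hlt)

end Degree

section DegreeGroup

variable {σ M : Type*} [AddCommGroup M] [SetLike σ M] [AddSubgroupClass σ M]
  {ℳ : ℤ → σ} [Decomposition ℳ] {x y : M} {D : ℤ}

lemma DegLE.sub (hx : DegLE ℳ x D) (hy : DegLE ℳ y D) : DegLE ℳ (x - y) D :=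
  fun n hn => by simp [hx n hn, hy n hn]

lemma DegLE.sub_pred (hx : DegLE ℳ x D) (hy : DegLE ℳ y D)
    (h : (decompose ℳ x D : M) = decompose ℳ y D) : DegLE ℳ (x - y) (D - 1) :=
  (hx.sub hy).pred (by simp [h])

end DegreeGroup

section Smul

variable {A σA : Type*} [Semiring A] [SetLike σA A] {𝒜 : ℤ → σA}
variable {M σ : Type*} [AddCommMonoid M] [Module A M] [SetLike σ M] [AddSubmonoidClass σ M]
  {ℳ : ℤ → σ} [Decomposition ℳ] [SetLike.GradedSMul 𝒜 ℳ]

lemma coe_decompose_smul_of_mem {a : A} {i : ℤ} (ha : a ∈ 𝒜 i) (m : M) (n : ℤ) :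
    (decompose ℳ (a • m) n : M) = a • (decompose ℳ m (n - i) : M) := by
  induction m using DirectSum.Decomposition.inductionOn ℳ with
  | zero => simp
  | @homogeneous j m =>
      have hsm : a • (m : M) ∈ ℳ (i + j) := SetLike.GradedSMul.smul_mem ha m.2
      by_cases hn : n = i + j
      · subst hn
        rw [decompose_of_mem_same ℳ hsm, add_sub_cancel_left, decompose_of_mem_same ℳ m.2]
      · rw [decompose_of_mem_ne ℳ hsm (Ne.symm hn),
          decompose_of_mem_ne ℳ m.2 (show j ≠ n - i by omega), smul_zero]
  | add m m' hm hm' => simp [smul_add, hm, hm']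

variable [AddSubmonoidClass σA A] [GradedRing 𝒜]

variable (𝒜) in
open Classical in
lemma coe_decompose_smul (a : A) (m : M) (n : ℤ) :
    (decompose ℳ (a • m) n : M) =
      ∑ i ∈ (decompose 𝒜 a).support, (decompose 𝒜 a i : A) • (decompose ℳ m (n - i) : M) := by
  conv_lhs => rw [← sum_support_decompose 𝒜 a, Finset.sum_smul, coe_decompose_sum]
  exact Finset.sum_congr rfl fun i _ => coe_decompose_smul_of_mem (SetLike.coe_mem _) m n

variable (𝒜) in
lemma coe_decompose_smul_of_mem_right {m : M} {j : ℤ} (hm : m ∈ ℳ j) (a : A) (n : ℤ) :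
    (decompose ℳ (a • m) n : M) = (decompose 𝒜 a (n - j) : A) • m := by
  classical
  rw [coe_decompose_smul 𝒜, Finset.sum_eq_single (n - j)]
  · rw [sub_sub_cancel, decompose_of_mem_same ℳ hm]
  · intro i _ hi
    rw [decompose_of_mem_ne ℳ hm (show j ≠ n - i by omega), smul_zero]
  · intro hj
    rw [DFinsupp.notMem_support_iff.mp hj, ZeroMemClass.coe_zero, zero_smul]

lemma DegLE.smul {a : A} {m : M} {p q : ℤ} (ha : DegLE 𝒜 a p) (hm : DegLE ℳ m q) :
    DegLE ℳ (a • m) (p + q) := by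
  classical
  intro n hn
  rw [coe_decompose_smul 𝒜]
  refine Finset.sum_eq_zero fun i _ => ?_
  rcases le_or_gt i p with hi | hi
  · rw [hm _ (by omega), smul_zero]
  · rw [ha i hi, zero_smul]

lemma DegLE.coe_decompose_smul {a : A} {m : M} {p q : ℤ} (ha : DegLE 𝒜 a p)
    (hm : DegLE ℳ m q) :
    (decompose ℳ (a • m) (p + q) : M) = (decompose 𝒜 a p : A) • (decompose ℳ m q : M) := by
  classical
  rw [_root_.coe_decompose_smul 𝒜, Finset.sum_eq_single p]
  · rw [add_sub_cancel_left]
  · intro i _ hi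
    rcases lt_or_gt_of_ne hi with hi | hi
    · rw [hm _ (by omega), smul_zero]
    · rw [ha i hi, zero_smul]
  · intro hp
    rw [DFinsupp.notMem_support_iff.mp hp, ZeroMemClass.coe_zero, zero_smul]

variable (𝒜) in
lemma coe_decompose_sum_smul_of_mem {ι : Type*} (s : Finset ι) (c : ι → A) {g : ι → M}
    {e : ι → ℤ} (hg : ∀ i, g i ∈ ℳ (e i)) (n : ℤ) :
    (decompose ℳ (∑ i ∈ s, c i • g i) n : M) =
      ∑ i ∈ s, (decompose 𝒜 (c i) (n - e i) : A) • g i := by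
  rw [coe_decompose_sum]
  exact Finset.sum_congr rfl fun i _ => coe_decompose_smul_of_mem_right 𝒜 (hg i) (c i) n

end Smul

section FreeModule

variable {A σA : Type*} [Semiring A] [SetLike σA A] [AddSubmonoidClass σA A] (𝒜 : ℤ → σA)
  [GradedRing 𝒜] {ι : Type*} (w : ι → ℤ)

/-- Degree bound in the free module `⊕ᵢ A eᵢ` graded by `deg eᵢ = w i`. -/
def FreeDegLE (u : ι → A) (D : ℤ) : Prop := ∀ i, DegLE 𝒜 (u i) (D - w i)

def freeComponent (D : ℤ) (u : ι → A) : ι → A := fun i => decompose 𝒜 (u i) (D - w i)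

variable {𝒜 w} {u v : ι → A} {D D' : ℤ}

lemma freeComponent_mem (D : ℤ) (u : ι → A) (i : ι) :
    freeComponent 𝒜 w D u i ∈ 𝒜 (D - w i) :=
  SetLike.coe_mem _

lemma freeDegLE_freeComponent (D : ℤ) (u : ι → A) : FreeDegLE 𝒜 w (freeComponent 𝒜 w D u) D :=
  fun i => degLE_of_mem (freeComponent_mem D u i)

lemma FreeDegLE.mono (h : FreeDegLE 𝒜 w u D) (hD : D ≤ D') : FreeDegLE 𝒜 w u D' :=
  fun i => (h i).mono (by omega)

lemma FreeDegLE.add (hu : FreeDegLE 𝒜 w u D) (hv : FreeDegLE 𝒜 w v D) :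
    FreeDegLE 𝒜 w (u + v) D :=
  fun i => (hu i).add (hv i)

lemma FreeDegLE.sum {J : Type*} {s : Finset J} {f : J → ι → A}
    (h : ∀ j ∈ s, FreeDegLE 𝒜 w (f j) D) : FreeDegLE 𝒜 w (∑ j ∈ s, f j) D :=
  fun i => by
    rw [Finset.sum_apply]
    exact DegLE.sum fun j hj => h j hj i

lemma FreeDegLE.smul {a : A} {p : ℤ} (ha : DegLE 𝒜 a p) (hu : FreeDegLE 𝒜 w u D) :
    FreeDegLE 𝒜 w (a • u) (p + D) :=
  fun i => ((ha.smul (hu i)).mono (by omega) : DegLE 𝒜 (a • u i) _)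

lemma exists_freeDegLE [Finite ι] (u : ι → A) : ∃ D, FreeDegLE 𝒜 w u D := by
  obtain ⟨D, hD⟩ := Finite.exists_le fun i => mdeg 𝒜 (u i) + w i
  exact ⟨D, fun i => (degLE_mdeg 𝒜 (u i)).mono (by linarith [hD i])⟩

lemma exists_sum_freeComponent [Fintype ι] (u : ι → A) :
    ∃ E : Finset ℤ, ∑ D ∈ E, freeComponent 𝒜 w D u = u := by
  classical
  refine ⟨Finset.univ.biUnion fun i => (decompose 𝒜 (u i)).support.image (· + w i),
    funext fun i => ?_⟩
  rw [Finset.sum_apply]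
  simp only [freeComponent]
  rw [← Finset.sum_image (f := fun p => (decompose 𝒜 (u i) p : A)) (g := (· - w i))
    fun _ _ _ _ h => by simpa using h]
  conv_rhs => rw [← sum_support_decompose 𝒜 (u i)]
  refine (Finset.sum_subset (fun p hp => ?_) fun p _ hp => ?_).symm
  · simp only [Finset.mem_image, Finset.mem_biUnion, Finset.mem_univ, true_and]
    exact ⟨p + w i, ⟨i, p, hp, rfl⟩, add_sub_cancel_right p (w i)⟩
  · rw [DFinsupp.notMem_support_iff.mp hp, ZeroMemClass.coe_zero]

end FreeModule

section FreeModuleMap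

variable {A σA : Type*} [Semiring A] [SetLike σA A] [AddSubmonoidClass σA A] {𝒜 : ℤ → σA}
  [GradedRing 𝒜]
variable {M σ : Type*} [AddCommMonoid M] [Module A M] [SetLike σ M] [AddSubmonoidClass σ M]
  {ℳ : ℤ → σ} [Decomposition ℳ] [SetLike.GradedSMul 𝒜 ℳ]
variable {ι : Type*} [Fintype ι] {u : ι → A} {D : ℤ}

lemma FreeDegLE.degLE_sum_smul {x : ι → M} (h : FreeDegLE 𝒜 (fun i => mdeg ℳ (x i)) u D) :
    DegLE ℳ (∑ i, u i • x i) D :=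
  DegLE.sum fun i _ => by simpa using (h i).smul (degLE_mdeg ℳ (x i))

lemma FreeDegLE.coe_decompose_sum_smul {x : ι → M} (h : FreeDegLE 𝒜 (fun i => mdeg ℳ (x i)) u D) :
    (decompose ℳ (∑ i, u i • x i) D : M) =
      ∑ i, freeComponent 𝒜 (fun i => mdeg ℳ (x i)) D u i • ini ℳ (x i) := by
  rw [coe_decompose_sum]
  refine Finset.sum_congr rfl fun i _ => ?_
  have := (h i).coe_decompose_smul (degLE_mdeg ℳ (x i))
  rwa [sub_add_cancel] at this

lemma freeComponent_mem_ker {w : ι → ℤ} {v : ι → M} (hv : ∀ i, v i ∈ ℳ (w i))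
    (hu : u ∈ LinearMap.ker (Fintype.linearCombination A v)) (D : ℤ) :
    freeComponent 𝒜 w D u ∈ LinearMap.ker (Fintype.linearCombination A v) := by
  rw [LinearMap.mem_ker, Fintype.linearCombination_apply] at hu ⊢
  simp only [freeComponent]
  rw [← coe_decompose_sum_smul_of_mem 𝒜 _ _ hv, hu, decompose_zero, DirectSum.zero_apply,
    ZeroMemClass.coe_zero]

lemma exists_finset_homogeneous_span_eq_ker {w : ι → ℤ} {v : ι → M} (hv : ∀ i, v i ∈ ℳ (w i))
    (hK : (LinearMap.ker (Fintype.linearCombination A v)).FG) :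
    ∃ S : Finset (ℤ × (ι → A)), (∀ p ∈ S, ∀ i, p.2 i ∈ 𝒜 (p.1 - w i)) ∧
      Submodule.span A (Prod.snd '' (S : Set (ℤ × (ι → A)))) =
        LinearMap.ker (Fintype.linearCombination A v) := by
  classical
  obtain ⟨T, hT⟩ := hK
  choose E hE using fun u : ι → A => exists_sum_freeComponent (𝒜 := 𝒜) (w := w) u
  refine ⟨T.biUnion fun u => (E u).image fun D => (D, freeComponent 𝒜 w D u), ?_, ?_⟩
  · simp only [Finset.mem_biUnion, Finset.mem_image]
    rintro _ ⟨u, -, D, -, rfl⟩ i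
    exact freeComponent_mem D u i
  refine le_antisymm (Submodule.span_le.mpr ?_) (hT ▸ Submodule.span_le.mpr fun u hu => ?_)
  · simp only [Finset.coe_biUnion, Finset.coe_image, Set.image_iUnion₂, Set.image_image,
      Set.iUnion_subset_iff]
    rintro u hu _ ⟨D, -, rfl⟩
    exact freeComponent_mem_ker hv (hT ▸ Submodule.subset_span hu) D
  · rw [SetLike.mem_coe, ← hE u]
    refine Submodule.sum_mem _ fun D hD => Submodule.subset_span ?_
    exact ⟨(D, freeComponent 𝒜 w D u),
      Finset.mem_biUnion.mpr ⟨u, hu, Finset.mem_image_of_mem _ hD⟩, rfl⟩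

lemma degLE_sum_smul_pred_of_mem_ker {x : ι → M} {c : ι → A} {d : ℤ}
    (hc : ∀ i, c i ∈ 𝒜 (d - mdeg ℳ (x i)))
    (hker : c ∈ LinearMap.ker (Fintype.linearCombination A fun i => ini ℳ (x i))) :
    DegLE ℳ (∑ i, c i • x i) (d - 1) := by
  have hdeg : FreeDegLE 𝒜 (fun i => mdeg ℳ (x i)) c d := fun i => degLE_of_mem (hc i)
  refine hdeg.degLE_sum_smul.pred ?_
  rw [hdeg.coe_decompose_sum_smul, ← LinearMap.mem_ker.mp hker, Fintype.linearCombination_apply]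
  exact Finset.sum_congr rfl fun i _ => by rw [freeComponent, decompose_of_mem_same 𝒜 (hc i)]

end FreeModuleMap

section GrobnerBasis

variable {A : Type*} [CommRing A] {𝒜 : ℤ → AddSubgroup A} [GradedRing 𝒜]
  {M : Type*} [AddCommGroup M] [Module A M] {ℳ : ℤ → AddSubgroup M} [Decomposition ℳ]
  [SetLike.GradedSMul 𝒜 ℳ] {N : Submodule A M}

lemma IsGrobnerBasisSet.isGrobnerBasis {s : Set M} (h : IsGrobnerBasisSet ℳ N s) :
    IsGrobnerBasis ℳ N ((↑) : s → M) :=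
  ⟨fun i => h.1 i.2, by rw [← h.2, ← Set.image_eq_range]⟩

variable (𝒜) in
include 𝒜 in
lemma isHomogSubmodule_span {S : Set M} (hS : ∀ m ∈ S, ∃ n, m ∈ ℳ n) :
    IsHomogSubmodule ℳ (Submodule.span A S) := by
  classical
  intro x hx
  induction hx using Submodule.span_induction with
  | mem m hm =>
      intro n
      obtain ⟨d, hd⟩ := hS m hm
      by_cases h : d = n
      · subst h
        rw [decompose_of_mem_same ℳ hd]
        exact Submodule.subset_span hm
      · rw [decompose_of_mem_ne ℳ hd h]
        exact zero_mem _
  | zero => simp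
  | add a b _ _ iha ihb => simpa using fun n => add_mem (iha n) (ihb n)
  | smul a m _ ihm =>
      intro n
      rw [coe_decompose_smul 𝒜]
      exact Submodule.sum_mem _ fun i _ => Submodule.smul_mem _ _ (ihm _)

lemma decompose_mem_iniSub {y : M} {D : ℤ} (hy : y ∈ N) (h : DegLE ℳ y D) :
    (decompose ℳ y D : M) ∈ iniSub ℳ N := by
  by_cases hD : (decompose ℳ y D : M) = 0
  · rw [hD]
    exact zero_mem _
  · refine Submodule.subset_span ⟨y, hy, fun hy0 => hD (by simp [hy0]), ?_⟩
    rw [ini, h.mdeg_eq hD]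

variable {ι : Type*} {x : ι → M}

variable (𝒜) in
include 𝒜 in
lemma IsGrobnerBasis.isHomogSubmodule_iniSub (hx : IsGrobnerBasis ℳ N x) :
    IsHomogSubmodule ℳ (iniSub ℳ N) :=
  hx.2 ▸ isHomogSubmodule_span 𝒜 (by
    rintro _ ⟨i, rfl⟩
    exact ⟨_, ini_mem ℳ (x i)⟩)

variable [Fintype ι]

lemma IsGrobnerBasis.exists_degLE_sub_sum_smul (hx : IsGrobnerBasis ℳ N x) {y : M} {D : ℤ}
    (hy : y ∈ N) (h : DegLE ℳ y D) :
    ∃ b, FreeDegLE 𝒜 (fun i => mdeg ℳ (x i)) b D ∧ DegLE ℳ (y - ∑ i, b i • x i) (D - 1) := by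
  have hmem := decompose_mem_iniSub hy h
  rw [← hx.2] at hmem
  obtain ⟨a, ha⟩ := (Submodule.mem_span_range_iff_exists_fun A).mp hmem
  set b := freeComponent 𝒜 (fun i => mdeg ℳ (x i)) D a
  have hb : FreeDegLE 𝒜 (fun i => mdeg ℳ (x i)) b D := freeDegLE_freeComponent D a
  refine ⟨b, hb, h.sub_pred hb.degLE_sum_smul ?_⟩
  rw [hb.coe_decompose_sum_smul, ← decompose_of_mem_same ℳ (SetLike.coe_mem (decompose ℳ y D)),
    ← ha, coe_decompose_sum_smul_of_mem 𝒜 _ _ fun i => ini_mem ℳ (x i)]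
  exact Finset.sum_congr rfl fun i _ => by
    rw [freeComponent, decompose_of_mem_same 𝒜 (freeComponent_mem D a i)]
    rfl

lemma IsGrobnerBasis.exists_freeDegLE_sum_smul_eq (hM : ModuleBddBelow ℳ)
    (hx : IsGrobnerBasis ℳ N x) (D : ℤ) :
    ∀ y ∈ N, DegLE ℳ y D →
      ∃ r, FreeDegLE 𝒜 (fun i => mdeg ℳ (x i)) r D ∧ ∑ i, r i • x i = y := by
  obtain ⟨n₀, hn₀⟩ := hM
  induction D using Int.forall_of_forall_lt_of_pred n₀ with
  | base D hD =>
      intro y _ hy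
      refine ⟨0, fun i => degLE_zero _, ?_⟩
      simp [hy.eq_zero hn₀ hD]
  | step D ih =>
      intro y hyN hy
      obtain ⟨b, hb, hdeg⟩ := hx.exists_degLE_sub_sum_smul (𝒜 := 𝒜) hyN hy
      have hmem : y - ∑ i, b i • x i ∈ N :=
        sub_mem hyN (Submodule.sum_mem _ fun i _ => Submodule.smul_mem _ _ (hx.1 i))
      obtain ⟨r, hr, hsum⟩ := ih _ hmem hdeg
      refine ⟨b + r, hb.add (hr.mono (by omega)), ?_⟩
      simp only [Pi.add_apply, add_smul, Finset.sum_add_distrib, hsum, add_sub_cancel]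

variable (𝒜) in
include 𝒜 in
lemma IsGrobnerBasis.span_eq (hM : ModuleBddBelow ℳ) (hx : IsGrobnerBasis ℳ N x) :
    Submodule.span A (Set.range x) = N := by
  refine le_antisymm (Submodule.span_le.mpr (Set.range_subset_iff.mpr hx.1)) fun y hy => ?_
  obtain ⟨r, -, rfl⟩ := hx.exists_freeDegLE_sum_smul_eq (𝒜 := 𝒜) hM _ y hy (degLE_mdeg ℳ y)
  exact Submodule.sum_mem _ fun i _ => Submodule.smul_mem _ _ (Submodule.subset_span ⟨i, rfl⟩)

end GrobnerBasis

section Syzygies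

variable {A : Type*} [CommRing A] {𝒜 : ℤ → AddSubgroup A} [GradedRing 𝒜]
  {M : Type*} [AddCommGroup M] [Module A M] {ℳ : ℤ → AddSubgroup M} [Decomposition ℳ]
  [SetLike.GradedSMul 𝒜 ℳ] {ι : Type*}

lemma FreeDegLE.eq_zero (hA : RingNonnegGraded 𝒜) {w : ι → ℤ} {u : ι → A} {D : ℤ}
    (h : FreeDegLE 𝒜 w u D) (hD : ∀ i, D < w i) : u = 0 :=
  funext fun i => (h i).eq_zero hA (by linarith [hD i])

lemma FreeDegLE.sub_freeComponent {w : ι → ℤ} {u : ι → A} {D : ℤ} (h : FreeDegLE 𝒜 w u D) :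
    FreeDegLE 𝒜 w (u - freeComponent 𝒜 w D u) (D - 1) := fun i =>
  ((h i).sub_pred (degLE_of_mem (freeComponent_mem D u i))
    (decompose_of_mem_same 𝒜 (freeComponent_mem D u i)).symm).mono (by omega)

variable [Fintype ι] {x : ι → M} {J : Type*} [Fintype J] {c r : J → ι → A} {d : J → ℤ}

lemma exists_mem_span_freeDegLE_sub (hc : ∀ j i, c j i ∈ 𝒜 (d j - mdeg ℳ (x i)))
    (hcspan : Submodule.span A (Set.range c) =
      LinearMap.ker (Fintype.linearCombination A fun i => ini ℳ (x i)))
    (hr : ∀ j, FreeDegLE 𝒜 (fun i => mdeg ℳ (x i)) (r j) (d j - 1)) {u : ι → A} {D : ℤ}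
    (hu : u ∈ LinearMap.ker (Fintype.linearCombination A x))
    (hD : FreeDegLE 𝒜 (fun i => mdeg ℳ (x i)) u D) :
    ∃ s ∈ Submodule.span A (Set.range (c - r)),
      FreeDegLE 𝒜 (fun i => mdeg ℳ (x i)) (u - s) (D - 1) := by
  set v := freeComponent 𝒜 (fun i => mdeg ℳ (x i)) D u
  have hv : v ∈ LinearMap.ker (Fintype.linearCombination A fun i => ini ℳ (x i)) := by
    rw [LinearMap.mem_ker, Fintype.linearCombination_apply, ← hD.coe_decompose_sum_smul,
      ← Fintype.linearCombination_apply, LinearMap.mem_ker.mp hu]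
    simp
  rw [← hcspan] at hv
  obtain ⟨l, hl⟩ := (Submodule.mem_span_range_iff_exists_fun A).mp hv
  set μ : J → A := fun j => decompose 𝒜 (l j) (D - d j)
  have hμ : ∑ j, μ j • c j = v := by
    funext i
    have hli := congrFun hl i
    simp only [Finset.sum_apply, Pi.smul_apply] at hli ⊢
    have hvi : v i ∈ 𝒜 (D - mdeg ℳ (x i)) := freeComponent_mem (w := fun i => mdeg ℳ (x i)) D u i
    rw [← decompose_of_mem_same 𝒜 hvi, ← hli,
      coe_decompose_sum_smul_of_mem 𝒜 _ _ fun j => hc j i]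
    exact Finset.sum_congr rfl fun j _ => by rw [sub_sub_sub_cancel_right]
  refine ⟨∑ j, μ j • (c - r) j,
    Submodule.sum_mem _ fun j _ => Submodule.smul_mem _ _ (Submodule.subset_span ⟨j, rfl⟩), ?_⟩
  have hsplit : u - ∑ j, μ j • (c - r) j = (u - v) + ∑ j, μ j • r j := by
    simp only [Pi.sub_apply, smul_sub, Finset.sum_sub_distrib, hμ]
    abel
  rw [hsplit]
  refine hD.sub_freeComponent.add (FreeDegLE.sum fun j _ => ?_)
  exact ((hr j).smul (degLE_of_mem (SetLike.coe_mem _))).mono (by omega)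

theorem ker_linearCombination_eq_span_sub (hA : RingNonnegGraded 𝒜)
    (hc : ∀ j i, c j i ∈ 𝒜 (d j - mdeg ℳ (x i)))
    (hcspan : Submodule.span A (Set.range c) =
      LinearMap.ker (Fintype.linearCombination A fun i => ini ℳ (x i)))
    (hr : ∀ j, FreeDegLE 𝒜 (fun i => mdeg ℳ (x i)) (r j) (d j - 1))
    (hrc : ∀ j, ∑ i, r j i • x i = ∑ i, c j i • x i) :
    LinearMap.ker (Fintype.linearCombination A x) = Submodule.span A (Set.range (c - r)) := by
  have hle :
      Submodule.span A (Set.range (c - r)) ≤ LinearMap.ker (Fintype.linearCombination A x) := by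
    rw [Submodule.span_le]
    rintro _ ⟨j, rfl⟩
    simp [Fintype.linearCombination_apply, sub_smul, hrc]
  refine le_antisymm (fun u hu => ?_) hle
  obtain ⟨m, hm⟩ := Finite.exists_ge fun i => mdeg ℳ (x i)
  obtain ⟨D, hD⟩ := exists_freeDegLE (𝒜 := 𝒜) (w := fun i => mdeg ℳ (x i)) u
  induction D using Int.forall_of_forall_lt_of_pred m generalizing u with
  | base D hDm =>
      rw [hD.eq_zero hA fun i => by linarith [hm i]]
      exact zero_mem _
  | step D ih =>
      obtain ⟨s, hs, hus⟩ := exists_mem_span_freeDegLE_sub hc hcspan hr hu hD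
      simpa using add_mem (ih (u - s) (sub_mem hu (hle hs)) hus) hs

end Syzygies

/-- A Gröbner-coherent graded module is coherent as an ungraded module. -/
theorem stmt_5 {A M : Type*} [CommRing A] (𝒜 : ℤ → AddSubgroup A) [GradedRing 𝒜]
    [AddCommGroup M] [Module A M] (ℳ : ℤ → AddSubgroup M) [DirectSum.Decomposition ℳ]
    [SetLike.GradedSMul 𝒜 ℳ]
    (hA : RingNonnegGraded 𝒜) (hM : ModuleBddBelow ℳ)
    (h : GrobnerCoherent (A := A) ℳ) :
    Module.Finite A M ∧
      ∀ N : Submodule A M, N.FG → Module.FinitePresentation A N := by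
  obtain ⟨⟨hfin, hgc⟩, hgrob⟩ := h
  refine ⟨hfin, fun N hN => ?_⟩
  obtain ⟨s, hs⟩ := hgrob N hN
  set x : ↥(s : Set M) → M := (↑)
  have hx : IsGrobnerBasis ℳ N x := hs.isGrobnerBasis
  have hini : Module.FinitePresentation A (iniSub ℳ N) :=
    hgc _ (hx.2 ▸ Submodule.fg_span (Set.finite_range _)) (hx.isHomogSubmodule_iniSub 𝒜)
  obtain ⟨S, hS, hSspan⟩ := exists_finset_homogeneous_span_eq_ker (𝒜 := 𝒜)
    (fun i => ini_mem ℳ (x i)) (by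
      rwa [LinearMap.fg_ker_iff_finitePresentation_range, Fintype.range_linearCombination, hx.2])
  choose! r hr hrc using fun p hp => hx.exists_freeDegLE_sum_smul_eq (𝒜 := 𝒜) hM (p.1 - 1) _
    (Submodule.sum_mem _ fun i _ => Submodule.smul_mem _ _ (hx.1 i))
    (degLE_sum_smul_pred_of_mem_ker (hS p hp) (hSspan ▸ Submodule.subset_span ⟨p, hp, rfl⟩))
  have hker := ker_linearCombination_eq_span_sub (c := fun p : S => p.1.2) (d := fun p => p.1.1)
    (r := fun p => r p.1) hA (fun p => hS p.1 p.2) (by rw [← hSspan, Set.image_eq_range]; rfl)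
    (fun p => hr p.1 p.2) (fun p => hrc p.1 p.2)
  rw [← hx.span_eq 𝒜 hM, ← Fintype.range_linearCombination,
    ← LinearMap.fg_ker_iff_finitePresentation_range, hker]
  exact Submodule.fg_span (Set.finite_range _)
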